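/- arXiv:1708.08363 — 5 statements merged into one kernel-verified Lean document; each statement's English description precedes it below -/
import Mathlib

section
/- Suppose W : [0,∞) → ℝ is continuous and bounded with limit C₀ at infinity and ∫₁^∞ (W(ρ)−C₀)² dρ < ∞, and suppose G_m(ρ,σ) = √(ρσ) I_m(min{ρ,σ}) K_m(max{ρ,σ}) is the Green's kernel of (H₀+1)^{-1}, where I_m, K_m are modified Bessel functions. Then the kernel (W(ρ)−C₀) G_m(ρ,σ) is square integrable on (0,∞)×(0,∞), i.e., the operator (W−C₀)(H₀+1)^{-1} is Hilbert–Schmidt. -/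
/-!
The square of the kernel is integrated column by column (Tonelli):
`∫∫ (W ρ - C₀)² G(ρ,σ)² ≤ ‖W - C₀‖²_{L²(0,∞)} · sup_ρ ∫ G(ρ,σ)² dσ`.
The first factor is finite because `W` is continuous on `[0,1]` and `W - C₀` is square
integrable on `(1,∞)`. For the second, `G` is bounded for `σ ≤ 1` (continuity on `[0,1]²`,
exponential decay in `ρ` beyond) and is dominated by a multiple of `e^{-|ρ-σ|}` for `σ > 1`,
a translate of a fixed integrable function, so the column integrals are bounded uniformly in `ρ`.
-/

open MeasureTheory Set Real

theorem ContinuousOn.integrableOn_Ioi_of_integrableOn_Ioi {E : Type*} [NormedAddCommGroup E]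
    {f : ℝ → E} {a b : ℝ} (hf : ContinuousOn f (Icc a b)) (hb : IntegrableOn f (Ioi b)) :
    IntegrableOn f (Ioi a) :=
  (hf.integrableOn_Icc.union hb).mono_set fun x hx =>
    (le_or_gt x b).imp (fun hxb => ⟨le_of_lt hx, hxb⟩) id

theorem integrable_exp_neg_mul_abs {b : ℝ} (hb : 0 < b) :
    Integrable (fun t : ℝ => exp (-(b * |t|))) := by
  rw [← integrableOn_univ, ← Iic_union_Ioi (a := 0), integrableOn_union]
  constructor
  · refine (integrableOn_exp_mul_Iic hb 0).congr_fun (fun t ht => ?_) measurableSet_Iic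
    rw [abs_of_nonpos ht]; ring_nf
  · refine (integrableOn_exp_mul_Ioi (neg_neg_of_pos hb) 0).congr_fun (fun t ht => ?_)
      measurableSet_Ioi
    rw [abs_of_pos ht]; ring_nf

theorem Integrable.mul_prod_of_ae_lintegral_le {α β : Type*} [MeasurableSpace α]
    [MeasurableSpace β] {μ : Measure α} {ν : Measure β} {c : α → ℝ} {k : α × β → ℝ}
    (hc : Integrable c μ) (hk : AEStronglyMeasurable k (μ.prod ν)) {K : ENNReal} (hK : K ≠ ⊤)
    (hkK : ∀ᵐ x ∂μ, ∫⁻ y, ‖k (x, y)‖ₑ ∂ν ≤ K) :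
    Integrable (fun p => c p.1 * k p) (μ.prod ν) := by
  refine ⟨hc.aestronglyMeasurable.comp_fst.mul hk, ?_⟩
  calc ∫⁻ p, ‖c p.1 * k p‖ₑ ∂μ.prod ν
      ≤ ∫⁻ x, ∫⁻ y, ‖c x‖ₑ * ‖k (x, y)‖ₑ ∂ν ∂μ := by
        simpa only [enorm_mul] using lintegral_prod_le _
    _ = ∫⁻ x, ‖c x‖ₑ * ∫⁻ y, ‖k (x, y)‖ₑ ∂ν ∂μ :=
        lintegral_congr fun x => lintegral_const_mul' _ _ enorm_ne_top
    _ ≤ ∫⁻ x, ‖c x‖ₑ * K ∂μ :=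
        lintegral_mono_ae (hkK.mono fun x hx => by gcongr)
    _ = (∫⁻ x, ‖c x‖ₑ ∂μ) * K := lintegral_mul_const' _ _ hK
    _ < ⊤ := ENNReal.mul_lt_top hc.hasFiniteIntegral (lt_top_iff_ne_top.2 hK)

theorem setLIntegral_Ioi_zero_sq_le {g : ℝ → ℝ} {ρ D : ℝ}
    (hnear : ∀ σ ∈ Ioc (0:ℝ) 1, |g σ| ≤ D) (hfar : ∀ σ ∈ Ioi (1:ℝ), |g σ| ≤ D * exp (-|ρ - σ|)) :
    ∫⁻ σ in Ioi 0, ‖g σ ^ 2‖ₑ ≤ ‖D ^ 2‖ₑ * (1 + ∫⁻ t, ‖exp (-(2 * |t|))‖ₑ) := by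
  have hsq : ∀ {x y : ℝ}, |x| ≤ y → ‖x ^ 2‖ₑ ≤ ‖y ^ 2‖ₑ := fun h =>
    enorm_le_iff_norm_le.2 <| by
      simpa only [Real.norm_eq_abs, abs_pow, sq_abs] using
        pow_le_pow_left₀ (abs_nonneg _) (h.trans (le_abs_self _)) 2
  have hfar' : ∀ σ ∈ Ioi (1:ℝ), ‖g σ ^ 2‖ₑ ≤ ‖D ^ 2‖ₑ * ‖exp (-(2 * |σ - ρ|))‖ₑ := by
    intro σ hσ
    have hsq_exp : (D * exp (-|ρ - σ|)) ^ 2 = D ^ 2 * exp (-(2 * |σ - ρ|)) := by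
      rw [abs_sub_comm, mul_pow, sq (exp _), ← exp_add]; ring_nf
    simpa only [hsq_exp, enorm_mul] using hsq (hfar σ hσ)
  calc ∫⁻ σ in Ioi 0, ‖g σ ^ 2‖ₑ
      ≤ (∫⁻ σ in Ioc (0:ℝ) 1, ‖g σ ^ 2‖ₑ) + ∫⁻ σ in Ioi (1:ℝ), ‖g σ ^ 2‖ₑ := by
        rw [← Ioc_union_Ioi_eq_Ioi zero_le_one]; exact lintegral_union_le _ _ _
    _ ≤ (∫⁻ _ in Ioc (0:ℝ) 1, ‖D ^ 2‖ₑ) + ∫⁻ σ in Ioi (1:ℝ), ‖D ^ 2‖ₑ * ‖exp (-(2 * |σ - ρ|))‖ₑ :=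
        add_le_add (setLIntegral_mono' measurableSet_Ioc fun σ hσ => hsq (hnear σ hσ))
          (setLIntegral_mono' measurableSet_Ioi hfar')
    _ ≤ ‖D ^ 2‖ₑ * 1 + ‖D ^ 2‖ₑ * ∫⁻ σ, ‖exp (-(2 * |σ - ρ|))‖ₑ := by
        rw [setLIntegral_const, Real.volume_Ioc, sub_zero, ENNReal.ofReal_one,
          lintegral_const_mul' _ _ enorm_ne_top, mul_one]
        gcongr
        exact Measure.restrict_le_self
    _ = ‖D ^ 2‖ₑ * (1 + ∫⁻ t, ‖exp (-(2 * |t|))‖ₑ) := by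
        rw [lintegral_sub_right_eq_self (fun t => ‖exp (-(2 * |t|))‖ₑ) ρ, mul_add]

theorem exists_bound_near_and_exp_decay {m a₂ a₃ a₄ : ℝ} {G : ℝ → ℝ → ℝ} (hm : 0 ≤ m)
    (hGcont : Continuous (fun p : ℝ × ℝ => G p.1 p.2))
    (hG2 : ∀ ρ ∈ Ioc (0:ℝ) 1, ∀ σ ∈ Ioi (1:ℝ),
      |G ρ σ| ≤ a₂ * ρ ^ ((1:ℝ)/2 + m) * exp (-σ))
    (hG3 : ∀ ρ ∈ Ioi (1:ℝ), ∀ σ ∈ Ioc (0:ℝ) 1,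
      |G ρ σ| ≤ a₃ * exp (-ρ) * σ ^ ((1:ℝ)/2 + m))
    (hG4 : ∀ ρ ∈ Ioi (1:ℝ), ∀ σ ∈ Ioi (1:ℝ), |G ρ σ| ≤ a₄ * exp (-|ρ - σ|)) :
    ∃ D, ∀ ρ ∈ Ioi (0:ℝ), (∀ σ ∈ Ioc (0:ℝ) 1, |G ρ σ| ≤ D) ∧
      ∀ σ ∈ Ioi (1:ℝ), |G ρ σ| ≤ D * exp (-|ρ - σ|) := by
  obtain ⟨A, hA⟩ := (isCompact_Icc.prod isCompact_Icc :
    IsCompact (Icc (0:ℝ) 1 ×ˢ Icc (0:ℝ) 1)).exists_bound_of_continuousOn hGcont.continuousOn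
  have hpow_le_one : ∀ t ∈ Ioc (0:ℝ) 1, t ^ ((1:ℝ)/2 + m) ≤ 1 := fun t ht =>
    rpow_le_one ht.1.le ht.2 (by positivity)
  refine ⟨max (max A |a₂|) (max |a₃| |a₄|), fun ρ hρ => ⟨fun σ hσ => ?_, fun σ hσ => ?_⟩⟩
  · rcases le_or_gt ρ 1 with hρ1 | hρ1
    · calc |G ρ σ| ≤ A := hA (ρ, σ) ⟨⟨le_of_lt hρ, hρ1⟩, Ioc_subset_Icc_self hσ⟩
        _ ≤ _ := le_max_of_le_left (le_max_left _ _)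
    · calc |G ρ σ| ≤ a₃ * exp (-ρ) * σ ^ ((1:ℝ)/2 + m) := hG3 ρ hρ1 σ hσ
        _ ≤ |a₃| * 1 * 1 := by
          have hσ_pow := rpow_nonneg hσ.1.le ((1:ℝ)/2 + m)
          gcongr
          · exact le_abs_self _
          · exact exp_le_one_iff.2 (by linarith)
          · exact hpow_le_one σ hσ
        _ ≤ _ := by rw [mul_one, mul_one]; exact le_max_of_le_right (le_max_left _ _)
  · rcases le_or_gt ρ 1 with hρ1 | hρ1
    · calc |G ρ σ| ≤ a₂ * ρ ^ ((1:ℝ)/2 + m) * exp (-σ) := hG2 ρ ⟨hρ, hρ1⟩ σ hσ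
        _ ≤ |a₂| * 1 * exp (-|ρ - σ|) := by
          have hρ_pow := rpow_nonneg (le_of_lt hρ) ((1:ℝ)/2 + m)
          gcongr
          · exact le_abs_self _
          · exact hpow_le_one ρ ⟨hρ, hρ1⟩
          · rw [abs_sub_comm, abs_of_pos (by linarith [mem_Ioi.1 hσ])]
            linarith [mem_Ioi.1 hρ]
        _ ≤ _ := by rw [mul_one]; gcongr; exact le_max_of_le_left (le_max_right _ _)
    · calc |G ρ σ| ≤ a₄ * exp (-|ρ - σ|) := hG4 ρ hρ1 σ hσ
        _ ≤ _ := by gcongr; exact (le_abs_self _).trans (le_max_of_le_right (le_max_right _ _))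

theorem stmt_5_general (m : ℝ) (hm : 0 ≤ m)
    (W : ℝ → ℝ) (C₀ : ℝ)
    (hWcont : ContinuousOn W (Ici (0:ℝ)))
    (hWL2 : IntegrableOn (fun ρ => (W ρ - C₀)^2) (Ioi (1:ℝ)))
    (G : ℝ → ℝ → ℝ)
    (hGcont : Continuous (fun p : ℝ × ℝ => G p.1 p.2))
    (a₂ a₃ a₄ : ℝ)
    (hG2 : ∀ ρ ∈ Ioc (0:ℝ) 1, ∀ σ ∈ Ioi (1:ℝ),
      |G ρ σ| ≤ a₂ * ρ ^ ((1:ℝ)/2 + m) * Real.exp (-σ))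
    (hG3 : ∀ ρ ∈ Ioi (1:ℝ), ∀ σ ∈ Ioc (0:ℝ) 1,
      |G ρ σ| ≤ a₃ * Real.exp (-ρ) * σ ^ ((1:ℝ)/2 + m))
    (hG4 : ∀ ρ ∈ Ioi (1:ℝ), ∀ σ ∈ Ioi (1:ℝ),
      |G ρ σ| ≤ a₄ * Real.exp (-|ρ - σ|)) :
    IntegrableOn (fun p : ℝ × ℝ => ((W p.1 - C₀) * G p.1 p.2)^2)
      (Ioi (0:ℝ) ×ˢ Ioi (0:ℝ)) := by
  obtain ⟨D, hD⟩ := exists_bound_near_and_exp_decay hm hGcont hG2 hG3 hG4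
  have hW : IntegrableOn (fun ρ => (W ρ - C₀) ^ 2) (Ioi 0) :=
    (((hWcont.sub continuousOn_const).pow 2).mono
      Icc_subset_Ici_self).integrableOn_Ioi_of_integrableOn_Ioi hWL2
  have hK : ‖D ^ 2‖ₑ * (1 + ∫⁻ t, ‖exp (-(2 * |t|))‖ₑ) ≠ ⊤ :=
    ENNReal.mul_ne_top enorm_ne_top <| ENNReal.add_ne_top.2
      ⟨ENNReal.one_ne_top, (integrable_exp_neg_mul_abs two_pos).hasFiniteIntegral.ne⟩
  simp only [mul_pow]
  rw [IntegrableOn, Measure.volume_eq_prod, ← Measure.prod_restrict]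
  exact Integrable.mul_prod_of_ae_lintegral_le hW (hGcont.pow 2).aestronglyMeasurable hK <|
    (ae_restrict_iff' measurableSet_Ioi).2 <| ae_of_all _ fun ρ hρ =>
      setLIntegral_Ioi_zero_sq_le (hD ρ hρ).1 (hD ρ hρ).2

/-- the kernel `(W(ρ)−C₀) G_m(ρ,σ)` is square integrable on
`(0,∞)×(0,∞)`, i.e. `(W−C₀)(H₀+1)⁻¹` is Hilbert–Schmidt.  The Green's kernel
`G_m(ρ,σ) = √(ρσ) I_m(min) K_m(max)` is encoded through its standard bounds. -/
theorem stmt_5 (m : ℝ) (hm : 0 ≤ m)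
    (W : ℝ → ℝ) (C₀ : ℝ)
    (hWcont : ContinuousOn W (Ici (0:ℝ)))
    (hWbd : ∃ M : ℝ, ∀ ρ ≥ (0:ℝ), |W ρ| ≤ M)
    (hWlim : Filter.Tendsto W Filter.atTop (nhds C₀))
    (hWL2 : IntegrableOn (fun ρ => (W ρ - C₀)^2) (Ioi (1:ℝ)))
    (G : ℝ → ℝ → ℝ)
    (hGcont : Continuous (fun p : ℝ × ℝ => G p.1 p.2))
    (a₁ a₂ a₃ a₄ : ℝ) (ha₁ : 0 < a₁) (ha₂ : 0 < a₂) (ha₃ : 0 < a₃) (ha₄ : 0 < a₄)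
    (hG1₀ : m = 0 → ∀ ρ ∈ Ioc (0:ℝ) 1, ∀ σ ∈ Ioc (0:ℝ) 1,
      |G ρ σ| ≤ a₁ * Real.sqrt (min ρ σ) * |Real.log (max ρ σ)|)
    (hG1 : 0 < m → ∀ ρ ∈ Ioc (0:ℝ) 1, ∀ σ ∈ Ioc (0:ℝ) 1,
      |G ρ σ| ≤ a₁ * (min ρ σ) ^ ((1:ℝ)/2 + m) * (max ρ σ) ^ ((1:ℝ)/2 - m))
    (hG2 : ∀ ρ ∈ Ioc (0:ℝ) 1, ∀ σ ∈ Ioi (1:ℝ),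
      |G ρ σ| ≤ a₂ * ρ ^ ((1:ℝ)/2 + m) * Real.exp (-σ))
    (hG3 : ∀ ρ ∈ Ioi (1:ℝ), ∀ σ ∈ Ioc (0:ℝ) 1,
      |G ρ σ| ≤ a₃ * Real.exp (-ρ) * σ ^ ((1:ℝ)/2 + m))
    (hG4 : ∀ ρ ∈ Ioi (1:ℝ), ∀ σ ∈ Ioi (1:ℝ),
      |G ρ σ| ≤ a₄ * Real.exp (-|ρ - σ|)) :
    IntegrableOn (fun p : ℝ × ℝ => ((W p.1 - C₀) * G p.1 p.2)^2)
      (Ioi (0:ℝ) ×ˢ Ioi (0:ℝ)) :=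
  stmt_5_general m hm W C₀ hWcont hWL2 G hGcont a₂ a₃ a₄ hG2 hG3 hG4
end

section
/- Suppose V : (0,∞) → ℝ can be written as V(ρ) = C₀ + (C₁ + f(ρ))/ρ with C₁ < 0 and f continuous satisfying f(ρ) → 0 as ρ → ∞. Let u ∈ C₀^∞(0,∞) with supp u ⊂ (1,2) and ‖u‖ = 1, and set u_n(ρ) = 2^{−n/2} u(2^{−n}ρ). Then the u_n are orthonormal with pairwise disjoint supports, and there exists N such that for all n ≥ N, ∫₀^∞ ( |u_n'(ρ)|² + (V(ρ) − C₀)|u_n(ρ)|² ) dρ < 0. -/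
open MeasureTheory Set

/-- the scaled trial functions `u_n(ρ) = 2^{−n/2} u(2^{−n}ρ)` are
orthonormal with pairwise disjoint supports, and eventually have negative
energy relative to the threshold `C₀`. -/
theorem stmt_8 (C₀ C₁ : ℝ) (hC₁ : C₁ < 0)
    (f : ℝ → ℝ) (hfcont : ContinuousOn f (Ioi (0:ℝ)))
    (hflim : Filter.Tendsto f Filter.atTop (nhds 0))
    (V : ℝ → ℝ) (hV : ∀ ρ ∈ Ioi (0:ℝ), V ρ = C₀ + (C₁ + f ρ)/ρ)
    (u : ℝ → ℝ) (hu : ContDiff ℝ (⊤ : ℕ∞) u) (hucs : HasCompactSupport u)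
    (husupp : tsupport u ⊆ Ioo (1:ℝ) 2)
    (hnorm : ∫ ρ in Ioi (0:ℝ), (u ρ)^2 = 1)
    (un : ℕ → ℝ → ℝ)
    (hun : ∀ n ρ, un n ρ = (2:ℝ) ^ (-(n:ℝ)/2) * u ((2:ℝ) ^ (-(n:ℝ)) * ρ)) :
    (∀ n m : ℕ, n ≠ m → Disjoint (Function.support (un n)) (Function.support (un m))) ∧
    (∀ n m : ℕ, (∫ ρ in Ioi (0:ℝ), un n ρ * un m ρ) = if n = m then 1 else 0) ∧
    (∃ N : ℕ, ∀ n ≥ N,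
      (∫ ρ in Ioi (0:ℝ), ((deriv (un n) ρ)^2 + (V ρ - C₀) * (un n ρ)^2)) < 0) := by
  have hcpos : ∀ n : ℕ, (0:ℝ) < (2:ℝ) ^ (-(n:ℝ)) := fun n => Real.rpow_pos_of_pos two_pos _
  have hppos : ∀ n : ℕ, (0:ℝ) < (2:ℝ) ^ ((n:ℝ)) := fun n => Real.rpow_pos_of_pos two_pos _
  have hinv : ∀ n : ℕ, (2:ℝ) ^ (-(n:ℝ)) * (2:ℝ) ^ ((n:ℝ)) = 1 := by
    intro n; rw [← Real.rpow_add two_pos]; norm_num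
  have hr2 : ∀ n : ℕ, (2:ℝ) ^ (-(n:ℝ)/2) * (2:ℝ) ^ (-(n:ℝ)/2) = (2:ℝ) ^ (-(n:ℝ)) := by
    intro n; rw [← Real.rpow_add two_pos]; norm_num
  -- support estimate
  have hsupp : ∀ n : ℕ, Function.support (un n) ⊆
      Ioo ((2:ℝ) ^ ((n:ℝ))) (2 * (2:ℝ) ^ ((n:ℝ))) := by
    intro n ρ hρ
    rw [Function.mem_support, hun n ρ] at hρ
    have h1 : u ((2:ℝ) ^ (-(n:ℝ)) * ρ) ≠ 0 := by
      intro h; rw [h, mul_zero] at hρ; exact hρ rfl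
    obtain ⟨ha, hb⟩ := husupp (subset_tsupport u h1)
    have hcn := hcpos n; have hpn := hppos n; have hi := hinv n
    constructor
    · nlinarith
    · nlinarith
  -- disjointness of the target intervals
  have hIdisj : ∀ n m : ℕ, n < m →
      Disjoint (Ioo ((2:ℝ) ^ ((n:ℝ))) (2 * (2:ℝ) ^ ((n:ℝ))))
        (Ioo ((2:ℝ) ^ ((m:ℝ))) (2 * (2:ℝ) ^ ((m:ℝ)))) := by
    intro n m hnm
    have h1 : 2 * (2:ℝ) ^ ((n:ℝ)) = (2:ℝ) ^ ((n:ℝ) + 1) := by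
      rw [Real.rpow_add two_pos, Real.rpow_one]; ring
    have h2 : (2:ℝ) ^ ((n:ℝ) + 1) ≤ (2:ℝ) ^ ((m:ℝ)) := by
      apply Real.rpow_le_rpow_of_exponent_le one_le_two
      have : (n:ℝ) + 1 ≤ (m:ℝ) := by exact_mod_cast Nat.succ_le_of_lt hnm
      linarith
    rw [Set.disjoint_left]
    intro x hx hy
    have := hx.2; have := hy.1
    rw [h1] at *
    linarith
  have hdisj : ∀ n m : ℕ, n ≠ m →
      Disjoint (Function.support (un n)) (Function.support (un m)) := by
    intro n m hnm
    rcases lt_or_gt_of_ne hnm with h | h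
    · exact (hIdisj n m h).mono (hsupp n) (hsupp m)
    · exact ((hIdisj m n h).symm).mono (hsupp n) (hsupp m)
  refine ⟨hdisj, ?_, ?_⟩
  · -- orthonormality
    intro n m
    by_cases h : n = m
    · subst h
      rw [if_pos rfl]
      have key : (∫ ρ in Ioi (0:ℝ), un n ρ * un n ρ)
          = ∫ ρ in Ioi (0:ℝ), (2:ℝ) ^ (-(n:ℝ)) * ((fun σ => (u σ)^2) ((2:ℝ) ^ (-(n:ℝ)) * ρ)) := by
        congr 1
        funext ρ
        rw [hun n ρ]
        simp only
        linear_combination (u ((2:ℝ) ^ (-(n:ℝ)) * ρ))^2 * hr2 n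
      rw [key, integral_const_mul,
        integral_comp_mul_left_Ioi (fun σ => (u σ)^2) 0 (hcpos n), mul_zero, smul_eq_mul,
        hnorm]
      field_simp
    · rw [if_neg h]
      have hz : ∀ ρ, un n ρ * un m ρ = 0 := by
        intro ρ
        by_cases h1 : un n ρ = 0
        · rw [h1, zero_mul]
        · have h2 : un m ρ = 0 := by
            by_contra h2
            exact Set.disjoint_left.mp (hdisj n m h) h1 h2
          rw [h2, mul_zero]
      simp only [hz, integral_zero]
  · -- negative energy
    set K := ∫ σ in Ioi (0:ℝ), (deriv u σ)^2 with hKdef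
    have hK0 : 0 ≤ K := setIntegral_nonneg measurableSet_Ioi fun σ _ => sq_nonneg _
    have hev : ∀ᶠ x in Filter.atTop, f x < -C₁/2 :=
      hflim.eventually (gt_mem_nhds (by linarith))
    obtain ⟨R, hR⟩ := Filter.eventually_atTop.mp hev
    refine ⟨max ⌈R⌉₊ (max 1 (⌈4*K/(-C₁)⌉₊ + 1)), fun n hn => ?_⟩
    have hn1 : 1 ≤ n := le_trans (le_trans (le_max_left 1 _) (le_max_right _ _)) hn
    have hnceil : (⌈R⌉₊ : ℕ) ≤ n := le_trans (le_max_left _ _) hn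
    have hnK : (⌈4*K/(-C₁)⌉₊ + 1 : ℕ) ≤ n :=
      le_trans (le_trans (le_max_right 1 _) (le_max_right _ _)) hn
    set c : ℝ := (2:ℝ) ^ (-(n:ℝ)) with hcdef
    have hc : 0 < c := hcpos n
    have hcinv : c⁻¹ = (2:ℝ) ^ ((n:ℝ)) := by
      rw [hcdef, ← Real.rpow_neg (le_of_lt two_pos), neg_neg]
    have hn2 : (n:ℝ) ≤ (2:ℝ) ^ ((n:ℝ)) := by
      rw [Real.rpow_natCast]
      exact_mod_cast (Nat.lt_two_pow_self (n := n)).le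
    have hRn : R ≤ (2:ℝ) ^ ((n:ℝ)) := by
      calc R ≤ (⌈R⌉₊ : ℝ) := Nat.le_ceil R
        _ ≤ (n:ℝ) := by exact_mod_cast hnceil
        _ ≤ _ := hn2
    have hcK : c * K < -C₁/4 := by
      have hnpos : (0:ℝ) < (n:ℝ) := by exact_mod_cast hn1
      have hcle : c ≤ (n:ℝ)⁻¹ := by
        rw [hcdef, Real.rpow_neg (by norm_num : (0:ℝ) ≤ 2)]
        exact inv_anti₀ hnpos hn2
      have h4K : 4*K/(-C₁) < (n:ℝ) := by
        calc 4*K/(-C₁) ≤ (⌈4*K/(-C₁)⌉₊ : ℝ) := Nat.le_ceil _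
          _ < (⌈4*K/(-C₁)⌉₊ : ℝ) + 1 := by linarith
          _ ≤ (n:ℝ) := by exact_mod_cast hnK
      have h4K' : 4*K < (n:ℝ) * (-C₁) := by
        have hC : (0:ℝ) < -C₁ := by linarith
        calc 4*K = (4*K/(-C₁)) * (-C₁) := (div_mul_cancel₀ _ (ne_of_gt hC)).symm
          _ < (n:ℝ) * (-C₁) := by exact mul_lt_mul_of_pos_right h4K hC
      have : c * K ≤ (n:ℝ)⁻¹ * K := mul_le_mul_of_nonneg_right hcle hK0
      have hKn : (n:ℝ)⁻¹ * K < -C₁/4 := by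
        rw [inv_mul_eq_div, div_lt_iff₀ hnpos]
        nlinarith
      linarith
    -- define G and H
    set G : ℝ → ℝ := fun σ => c^3 * (deriv u σ)^2 + ((C₁ + f (c⁻¹ * σ))/σ) * (c^2 * (u σ)^2)
      with hGdef
    set H : ℝ → ℝ := fun σ => c^3 * (deriv u σ)^2 + (C₁/4) * (c^2 * (u σ)^2) with hHdef
    -- Step A: rewrite the integrand
    have stepA : (∫ ρ in Ioi (0:ℝ), ((deriv (un n) ρ)^2 + (V ρ - C₀) * (un n ρ)^2))
        = ∫ ρ in Ioi (0:ℝ), G (c * ρ) := by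
      apply setIntegral_congr_fun measurableSet_Ioi
      intro ρ hρ
      have hρ0 : (0:ℝ) < ρ := hρ
      show deriv (un n) ρ ^ 2 + (V ρ - C₀) * un n ρ ^ 2 = G (c * ρ)
      have hfun : un n = fun ρ => (2:ℝ) ^ (-(n:ℝ)/2) * u (c * ρ) := funext (hun n)
      have hd : deriv (un n) ρ = (2:ℝ) ^ (-(n:ℝ)/2) * (deriv u (c * ρ) * c) := by
        rw [hfun]
        have h1 : HasDerivAt u (deriv u (c*ρ)) (c*ρ) :=
          ((hu.differentiable (by simp)) (c*ρ)).hasDerivAt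
        have h2 : HasDerivAt (fun x : ℝ => c * x) c ρ := by
          simpa using (hasDerivAt_id ρ).const_mul c
        have h3 : HasDerivAt (fun x : ℝ => u (c * x)) (deriv u (c*ρ) * c) ρ := h1.comp ρ h2
        exact (h3.const_mul ((2:ℝ) ^ (-(n:ℝ)/2))).deriv
      have hr2' : ((2:ℝ) ^ (-(n:ℝ)/2))^2 = c := by rw [sq]; exact hr2 n
      rw [hd, hun n ρ, hV ρ hρ, hGdef]
      simp only
      have hci : c⁻¹ * (c * ρ) = ρ := by field_simp
      rw [hci]
      have hρne : ρ ≠ 0 := ne_of_gt hρ0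
      have hcne : c ≠ 0 := ne_of_gt hc
      simp only [mul_pow]
      rw [hr2']
      rw [← hcdef]
      field_simp
      ring
    -- integrability facts
    have hdc : Continuous (deriv u) := hu.continuous_deriv (by simp)
    have hkin_int : Integrable (fun σ => c^3 * (deriv u σ)^2) := by
      apply Continuous.integrable_of_hasCompactSupport
      · exact continuous_const.mul (hdc.pow 2)
      · exact (hucs.deriv).comp_left (g := fun t => c^3 * t^2) (by simp)
    have hu2_int : Integrable (fun σ => (u σ)^2) := by
      apply Continuous.integrable_of_hasCompactSupport
      · exact (hu.continuous).pow 2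
      · exact hucs.comp_left (g := fun t => t^2) (by simp)
    have hH2_int : Integrable (fun σ => (C₁/4) * (c^2 * (u σ)^2)) :=
      (hu2_int.const_mul (c^2)).const_mul (C₁/4)
    set p : ℝ → ℝ := fun σ => ((C₁ + f (c⁻¹ * σ))/σ) * (c^2 * (u σ)^2) with hpdef
    have hp_eq : p = (Ioo (1:ℝ) 2).indicator p := by
      funext σ
      by_cases hσ : σ ∈ Ioo (1:ℝ) 2
      · rw [indicator_of_mem hσ]
      · rw [indicator_of_notMem hσ]
        have hu0 : u σ = 0 := by
          by_contra h
          exact hσ (husupp (subset_tsupport u h))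
        show ((C₁ + f (c⁻¹ * σ))/σ) * (c^2 * (u σ)^2) = 0
        rw [hu0]; ring
    have hp_cont : ContinuousOn p (Icc (1:ℝ) 2) := by
      apply ContinuousOn.mul
      · apply ContinuousOn.div
        · apply ContinuousOn.add continuousOn_const
          apply hfcont.comp ((continuous_const.mul continuous_id).continuousOn)
          intro σ hσ
          have : (0:ℝ) < c⁻¹ * σ := by
            have := hσ.1
            positivity
          exact this
        · exact continuousOn_id
        · intro σ hσ h
          have h1 : (1:ℝ) ≤ σ := hσ.1
          have h2 : σ = 0 := by simpa using h
          linarith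
      · exact (continuous_const.mul ((hu.continuous).pow 2)).continuousOn
    have hp_int : Integrable p := by
      rw [hp_eq]
      exact ((hp_cont.integrableOn_Icc).mono_set Ioo_subset_Icc_self).integrable_indicator
        measurableSet_Ioo
    have hG_int : IntegrableOn G (Ioi (0:ℝ)) := (hkin_int.add hp_int).integrableOn
    have hH_int : IntegrableOn H (Ioi (0:ℝ)) := (hkin_int.add hH2_int).integrableOn
    -- pointwise bound
    have hGH : ∀ σ ∈ Ioi (0:ℝ), G σ ≤ H σ := by
      intro σ hσ
      have hσ0 : (0:ℝ) < σ := hσ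
      rw [hGdef, hHdef]
      simp only
      by_cases hu0 : u σ = 0
      · simp [hu0]
      · obtain ⟨h1, h2⟩ := husupp (subset_tsupport u hu0)
        have hfb : f (c⁻¹ * σ) < -C₁/2 := by
          apply hR
          calc R ≤ (2:ℝ)^((n:ℝ)) := hRn
            _ = c⁻¹ := hcinv.symm
            _ = c⁻¹ * 1 := (mul_one _).symm
            _ ≤ c⁻¹ * σ := by
                apply mul_le_mul_of_nonneg_left (le_of_lt h1)
                positivity
        have hq : (C₁ + f (c⁻¹ * σ))/σ ≤ C₁/4 := by
          rw [div_le_iff₀ hσ0]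
          nlinarith
        have := mul_le_mul_of_nonneg_right hq (show (0:ℝ) ≤ c^2 * (u σ)^2 by positivity)
        linarith
    -- evaluate ∫ H
    have hHval : (∫ σ in Ioi (0:ℝ), H σ) = c^3 * K + C₁/4 * c^2 := by
      rw [hHdef]
      rw [integral_add hkin_int.integrableOn hH2_int.integrableOn]
      rw [integral_const_mul, integral_const_mul]
      have : (∫ σ in Ioi (0:ℝ), c^2 * (u σ)^2) = c^2 := by
        rw [integral_const_mul, hnorm, mul_one]
      rw [this, hKdef]
    -- put it together
    rw [stepA, integral_comp_mul_left_Ioi G 0 hc, mul_zero, smul_eq_mul]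
    have hGle : (∫ σ in Ioi (0:ℝ), G σ) ≤ c^3 * K + C₁/4 * c^2 := by
      rw [← hHval]
      exact setIntegral_mono_on hG_int hH_int measurableSet_Ioi hGH
    have hfinal : c⁻¹ * (∫ σ in Ioi (0:ℝ), G σ) ≤ c⁻¹ * (c^3 * K + C₁/4 * c^2) :=
      mul_le_mul_of_nonneg_left hGle (by positivity)
    have heq : c⁻¹ * (c^3 * K + C₁/4 * c^2) = c^2 * K + C₁/4 * c := by
      field_simp
    have hneg : c^2 * K + C₁/4 * c < 0 := by nlinarith
    calc c⁻¹ * (∫ σ in Ioi (0:ℝ), G σ) ≤ c⁻¹ * (c^3 * K + C₁/4 * c^2) := hfinal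
      _ = c^2 * K + C₁/4 * c := heq
      _ < 0 := hneg
end

section
/- The function W(r) := V_YMH(r) − 2/r², where V_YMH(r) = 1/sinh²(r) + 2/r² − 2coth(r)/r + coth²(r), extends to a continuous bounded function on [0,∞) with limit C₀ = 1 at infinity, and ∫₁^∞ (W(r) − 1)² dr < ∞. -/
/-! Since `coth² = 1 + 1/sinh²`, for `r ≠ 0` one has
`W(r) := V_YMH(r) - 2/r² = 1 + 2/sinh² r - 2 coth r / r = 1 - 8 u(2r) (r / sinh r)²`,
where `u(x) = (sinh x - x)/x³ → 1/6` by L'Hôpital applied three times; so `W` extends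
continuously to `0` with `W(0) = -1/3`. For `r ≥ 1` both correction terms lie in `[0, 4/r]`
(there `cosh ≤ 2 sinh`), so `|W - 1| ≤ 4/r`: this gives the limit `1` at infinity and the
square integrability on `(1, ∞)`, and boundedness follows from continuity and the limit. -/

open MeasureTheory Set Filter Topology Real

theorem lhopital_zero_nhdsNE_of_forall_hasDerivAt {f g f' g' : ℝ → ℝ} {a : ℝ} {l : Filter ℝ}
    (hf : ∀ x, HasDerivAt f (f' x) x) (hg : ∀ x, HasDerivAt g (g' x) x)
    (hfa : f a = 0) (hga : g a = 0) (hg' : ∀ x ≠ a, g' x ≠ 0)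
    (hdiv : Tendsto (fun x => f' x / g' x) (𝓝[≠] a) l) :
    Tendsto (fun x => f x / g x) (𝓝[≠] a) l := by
  have tendsto_zero {u u' : ℝ → ℝ} (hu : ∀ x, HasDerivAt u (u' x) x) (hua : u a = 0) :
      Tendsto u (𝓝[≠] a) (𝓝 0) :=
    hua ▸ ((hu a).continuousAt.tendsto).mono_left nhdsWithin_le_nhds
  exact HasDerivAt.lhopital_zero_nhdsNE (.of_forall hf) (.of_forall hg)
    (eventually_nhdsWithin_of_forall hg') (tendsto_zero hf hfa) (tendsto_zero hg hga) hdiv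

theorem tendsto_self_div_sinh_nhdsNE_zero : Tendsto (fun x => x / sinh x) (𝓝[≠] 0) (𝓝 1) := by
  refine lhopital_zero_nhdsNE_of_forall_hasDerivAt hasDerivAt_id' hasDerivAt_sinh rfl sinh_zero
    (fun x _ => (cosh_pos x).ne') ?_
  have h : ContinuousAt (fun x => 1 / cosh x) 0 := by fun_prop (disch := exact (cosh_pos _).ne')
  simpa using h.tendsto.mono_left nhdsWithin_le_nhds

theorem tendsto_sinh_sub_self_div_pow_three_nhdsNE_zero :
    Tendsto (fun x => (sinh x - x) / x ^ 3) (𝓝[≠] 0) (𝓝 (1 / 6)) := by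
  have hcosh : Tendsto (fun x => cosh x / 6) (𝓝[≠] 0) (𝓝 (1 / 6)) := by
    have h : ContinuousAt (fun x => cosh x / 6) 0 := by fun_prop
    simpa using h.tendsto.mono_left nhdsWithin_le_nhds
  have hsinh : Tendsto (fun x => sinh x / (6 * x)) (𝓝[≠] 0) (𝓝 (1 / 6)) :=
    lhopital_zero_nhdsNE_of_forall_hasDerivAt hasDerivAt_sinh
      (fun x => by simpa using (hasDerivAt_id' x).const_mul 6) sinh_zero (mul_zero 6)
      (fun _ _ => by norm_num) hcosh
  have hcosh_sub : Tendsto (fun x => (cosh x - 1) / (3 * x ^ 2)) (𝓝[≠] 0) (𝓝 (1 / 6)) :=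
    lhopital_zero_nhdsNE_of_forall_hasDerivAt (fun x => (hasDerivAt_cosh x).sub_const 1)
      (fun x => ((hasDerivAt_pow 2 x).const_mul 3).congr_deriv (by norm_num; ring))
      (by simp) (by simp) (fun x hx => by simpa using hx) hsinh
  exact lhopital_zero_nhdsNE_of_forall_hasDerivAt
    (fun x => (hasDerivAt_sinh x).sub (hasDerivAt_id' x))
    (fun x => by simpa using hasDerivAt_pow 3 x) (by simp) (by simp)
    (fun x hx => by simpa using hx) hcosh_sub

theorem cosh_le_two_mul_sinh {r : ℝ} (hr : 1 ≤ r) : cosh r ≤ 2 * sinh r := by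
  have hexp : exp (-r) ≤ 1 := exp_le_one_iff.mpr (by linarith)
  have hsinh : r ≤ sinh r := self_le_sinh_iff.mpr (by linarith)
  linarith [cosh_sub_sinh r]

theorem exists_abs_le_of_continuousOn_Ici_of_tendsto_atTop {f : ℝ → ℝ} {a l : ℝ}
    (hf : ContinuousOn f (Ici a)) (hlim : Tendsto f atTop (𝓝 l)) :
    ∃ M, ∀ x ≥ a, |f x| ≤ M := by
  obtain ⟨b, hb⟩ := eventually_atTop.mp (hlim.eventually (eventually_abs_sub_lt l one_pos))
  obtain ⟨C, hC⟩ := (isCompact_Icc (a := a) (b := b)).exists_bound_of_continuousOn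
    (hf.mono Icc_subset_Ici_self)
  refine ⟨max C (|l| + 1), fun x hx => ?_⟩
  rcases le_total x b with hxb | hbx
  · exact (hC x ⟨hx, hxb⟩).trans (le_max_left _ _)
  · have := abs_sub_abs_le_abs_sub (f x) l
    linarith [hb x hbx, le_max_right C (|l| + 1)]

noncomputable def reducedPotential (r : ℝ) : ℝ :=
  if r = 0 then -1 / 3 else 1 + 2 / sinh r ^ 2 - 2 * (cosh r / sinh r) / r

theorem reducedPotential_of_ne_zero {r : ℝ} (hr : r ≠ 0) :
    reducedPotential r = 1 + 2 / sinh r ^ 2 - 2 * (cosh r / sinh r) / r :=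
  if_neg hr

theorem reducedPotential_eq_one_sub {r : ℝ} (hr : r ≠ 0) :
    reducedPotential r =
      1 - 8 * ((sinh (2 * r) - 2 * r) / (2 * r) ^ 3) * (r / sinh r) ^ 2 := by
  have hs : sinh r ≠ 0 := sinh_ne_zero.mpr hr
  rw [reducedPotential_of_ne_zero hr, sinh_two_mul]
  field_simp
  ring

theorem tendsto_reducedPotential_nhdsNE_zero :
    Tendsto reducedPotential (𝓝[≠] 0) (𝓝 (reducedPotential 0)) := by
  have hdouble : Tendsto (fun r : ℝ => 2 * r) (𝓝[≠] 0) (𝓝[≠] 0) :=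
    tendsto_nhdsWithin_of_tendsto_nhds_of_eventually_within _
      (by simpa using ((continuous_const_mul (2 : ℝ)).tendsto 0).mono_left nhdsWithin_le_nhds)
      (eventually_nhdsWithin_of_forall fun r hr => mul_ne_zero two_ne_zero hr)
  have h : Tendsto (fun r => 1 - 8 * ((sinh (2 * r) - 2 * r) / (2 * r) ^ 3) * (r / sinh r) ^ 2)
      (𝓝[≠] 0) (𝓝 (1 - 8 * (1 / 6) * 1 ^ 2)) :=
    ((tendsto_sinh_sub_self_div_pow_three_nhdsNE_zero.comp hdouble).const_mul 8).mul
      (tendsto_self_div_sinh_nhdsNE_zero.pow 2) |>.const_sub 1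
  rw [show reducedPotential 0 = 1 - 8 * (1 / 6) * 1 ^ 2 by norm_num [reducedPotential]]
  refine h.congr' ?_
  filter_upwards [self_mem_nhdsWithin] with r hr using (reducedPotential_eq_one_sub hr).symm

theorem continuous_reducedPotential : Continuous reducedPotential := by
  refine continuous_iff_continuousAt.mpr fun x => ?_
  rcases eq_or_ne x 0 with rfl | hx
  · exact continuousWithinAt_compl_self.mp tendsto_reducedPotential_nhdsNE_zero
  · have hs : sinh x ≠ 0 := sinh_ne_zero.mpr hx
    have h : ContinuousAt (fun r => 1 + 2 / sinh r ^ 2 - 2 * (cosh r / sinh r) / r) x := by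
      fun_prop (disch := simp [hs])
    exact h.congr ((eventually_ne_nhds hx).mono fun r hr => (reducedPotential_of_ne_zero hr).symm)

theorem abs_reducedPotential_sub_one_le {r : ℝ} (hr : 1 ≤ r) :
    |reducedPotential r - 1| ≤ 4 / r := by
  have hr0 : 0 < r := by linarith
  have hsinh : r ≤ sinh r := self_le_sinh_iff.mpr hr0.le
  have hs : 0 < sinh r := hr0.trans_le hsinh
  have hcoth : cosh r / sinh r ≤ 2 :=
    (div_le_iff₀ hs).mpr (by linarith [cosh_le_two_mul_sinh hr])
  have ha : 2 / sinh r ^ 2 ≤ 2 / r := div_le_div_of_nonneg_left zero_le_two hr0 (by nlinarith)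
  have hb : 2 * (cosh r / sinh r) / r ≤ 4 / r := div_le_div_of_nonneg_right (by linarith) hr0.le
  have h24 : 2 / r ≤ 4 / r := div_le_div_of_nonneg_right (by norm_num) hr0.le
  have ha0 : 0 ≤ 2 / sinh r ^ 2 := by positivity
  have hb0 : 0 ≤ 2 * (cosh r / sinh r) / r := by have := cosh_pos r; positivity
  rw [reducedPotential_of_ne_zero hr0.ne', abs_le]
  constructor <;> linarith

theorem tendsto_reducedPotential_atTop : Tendsto reducedPotential atTop (𝓝 1) := by
  refine tendsto_iff_norm_sub_tendsto_zero.mpr <| squeeze_zero' (.of_forall fun _ => norm_nonneg _)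
    ?_ ((tendsto_const_nhds (x := (4 : ℝ))).div_atTop tendsto_id)
  filter_upwards [eventually_ge_atTop 1] with r hr using abs_reducedPotential_sub_one_le hr

theorem integrableOn_reducedPotential_sub_one_sq :
    IntegrableOn (fun r => (reducedPotential r - 1) ^ 2) (Ioi 1) := by
  have hg : IntegrableOn (fun r : ℝ => 16 * r ^ (-2 : ℝ)) (Ioi 1) :=
    (integrableOn_Ioi_rpow_of_lt (by norm_num) one_pos).const_mul 16
  refine hg.mono' ((continuous_reducedPotential.sub continuous_const).pow 2).aestronglyMeasurable ?_
  filter_upwards [ae_restrict_mem measurableSet_Ioi] with r (hr : 1 < r)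
  calc ‖(reducedPotential r - 1) ^ 2‖ = |reducedPotential r - 1| ^ 2 := by
        rw [norm_pow, Real.norm_eq_abs]
    _ ≤ (4 / r) ^ 2 := pow_le_pow_left₀ (abs_nonneg _) (abs_reducedPotential_sub_one_le hr.le) 2
    _ = 16 * r ^ (-2 : ℝ) := by
        rw [rpow_neg (by linarith), rpow_two]
        ring

/-- `W = V_YMH − 2/r²` extends to a continuous bounded function
on `[0,∞)` with limit `1` at infinity, and `∫₁^∞ (W − 1)² < ∞`. -/
theorem stmt_10 (V : ℝ → ℝ)
    (hV : ∀ r : ℝ, V r = 1/(Real.sinh r)^2 + 2/r^2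
        - 2*(Real.cosh r/Real.sinh r)/r + (Real.cosh r/Real.sinh r)^2) :
    ∃ W : ℝ → ℝ,
      ContinuousOn W (Ici (0:ℝ)) ∧
      (∀ r ∈ Ioi (0:ℝ), W r = V r - 2/r^2) ∧
      (∃ M : ℝ, ∀ r ≥ (0:ℝ), |W r| ≤ M) ∧
      Filter.Tendsto W Filter.atTop (nhds 1) ∧
      IntegrableOn (fun r => (W r - 1)^2) (Ioi (1:ℝ)) := by
  have hcont := continuous_reducedPotential.continuousOn (s := Ici 0)
  refine ⟨reducedPotential, hcont, fun r hr => ?_,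
    exists_abs_le_of_continuousOn_Ici_of_tendsto_atTop hcont tendsto_reducedPotential_atTop,
    tendsto_reducedPotential_atTop, integrableOn_reducedPotential_sub_one_sq⟩
  have hr0 : r ≠ 0 := (mem_Ioi.mp hr).ne'
  have hs : sinh r ≠ 0 := sinh_ne_zero.mpr hr0
  rw [hV, reducedPotential_of_ne_zero hr0, div_pow, cosh_sq]
  field_simp
  ring
end

section
/- If ω ≠ 0 and (ξ, ζ) solve −ξ'' + (1/sinh²r + 2/r² − 2coth(r)/r + coth²(r)) ξ = ω²ξ and −ζ'' + (2/sinh²r) ζ = ω²ζ, then the functions α and v defined by ωα = ζ' − ζ/r + (√2/sinh r) ξ and ωv = −ξ' − ((1 − r coth r)/r) ξ − (√2/sinh r) ζ solve the coupled system (−d²/dr² + 3/sinh²r − 2coth(r)/r + coth²(r)) v + (2√2 coth(r)/sinh(r)) α = ω²v and (−d²/dr² + 2/sinh²r + 2/r²) α + (2√2 coth(r)/sinh(r)) v = ω²α. -/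
set_option maxHeartbeats 8000000


open Set Real

/-- the decoupling transformation for the linearised YMH radial
system: solutions `(ξ, ζ)` of the decoupled equations yield solutions `(v, α)`
of the coupled system, provided `ω ≠ 0`. -/
theorem stmt_12 (ω : ℝ) (hω : ω ≠ 0)
    (ξ ζ : ℝ → ℝ)
    (hξs : ContDiffOn ℝ (⊤ : ℕ∞) ξ (Ioi (0:ℝ))) (hζs : ContDiffOn ℝ (⊤ : ℕ∞) ζ (Ioi (0:ℝ)))
    (hξ : ∀ r ∈ Ioi (0:ℝ),
      -(deriv (deriv ξ) r) + (1/(sinh r)^2 + 2/r^2 - 2*(cosh r/sinh r)/r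
        + (cosh r/sinh r)^2) * ξ r = ω^2 * ξ r)
    (hζ : ∀ r ∈ Ioi (0:ℝ),
      -(deriv (deriv ζ) r) + (2/(sinh r)^2) * ζ r = ω^2 * ζ r)
    (α v : ℝ → ℝ)
    (hα : ∀ r ∈ Ioi (0:ℝ),
      ω * α r = deriv ζ r - ζ r / r + (Real.sqrt 2 / sinh r) * ξ r)
    (hv : ∀ r ∈ Ioi (0:ℝ),
      ω * v r = -(deriv ξ r) - ((1 - r * (cosh r/sinh r))/r) * ξ r
        - (Real.sqrt 2 / sinh r) * ζ r) :
    (∀ r ∈ Ioi (0:ℝ),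
      -(deriv (deriv v) r) + (3/(sinh r)^2 - 2*(cosh r/sinh r)/r
          + (cosh r/sinh r)^2) * v r
        + (2*Real.sqrt 2 * (cosh r/sinh r)/sinh r) * α r = ω^2 * v r) ∧
    (∀ r ∈ Ioi (0:ℝ),
      -(deriv (deriv α) r) + (2/(sinh r)^2 + 2/r^2) * α r
        + (2*Real.sqrt 2 * (cosh r/sinh r)/sinh r) * v r = ω^2 * α r) := by
  obtain ⟨q, hq⟩ : ∃ q : ℝ, Real.sqrt 2 = q := ⟨_, rfl⟩
  have hq2 : q ^ 2 = 2 := by rw [← hq]; exact Real.sq_sqrt (by norm_num)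
  rw [hq] at hα hv ⊢
  have hod : IsOpen (Ioi (0:ℝ)) := isOpen_Ioi
  have hξd : ∀ x ∈ Ioi (0:ℝ), HasDerivAt ξ (deriv ξ x) x := fun x hx =>
    ((hξs.differentiableOn (by simp)).differentiableAt (hod.mem_nhds hx)).hasDerivAt
  have hζd : ∀ x ∈ Ioi (0:ℝ), HasDerivAt ζ (deriv ζ x) x := fun x hx =>
    ((hζs.differentiableOn (by simp)).differentiableAt (hod.mem_nhds hx)).hasDerivAt
  have hξd2 : ∀ x ∈ Ioi (0:ℝ), HasDerivAt (deriv ξ) (deriv (deriv ξ) x) x := fun x hx =>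
    (((hξs.deriv_of_isOpen (m := 1) hod (WithTop.coe_le_coe.mpr le_top)).differentiableOn one_ne_zero).differentiableAt
      (hod.mem_nhds hx)).hasDerivAt
  have hζd2 : ∀ x ∈ Ioi (0:ℝ), HasDerivAt (deriv ζ) (deriv (deriv ζ) x) x := fun x hx =>
    (((hζs.deriv_of_isOpen (m := 1) hod (WithTop.coe_le_coe.mpr le_top)).differentiableOn one_ne_zero).differentiableAt
      (hod.mem_nhds hx)).hasDerivAt
  -- first derivative of v
  have hdv : ∀ x ∈ Ioi (0:ℝ), deriv v x = ω⁻¹ *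
      ((ω^2 - 1 - 1/x^2 - 3/(Real.sinh x)^2 + 2*Real.cosh x/(x*Real.sinh x)) * ξ x
        + (Real.cosh x/Real.sinh x - 1/x) * deriv ξ x
        + q * Real.cosh x/(Real.sinh x)^2 * ζ x
        - q/Real.sinh x * deriv ζ x) := by
    intro x hx
    have hx0 : x ≠ 0 := ne_of_gt (mem_Ioi.mp hx)
    have hs0 : Real.sinh x ≠ 0 := ne_of_gt (Real.sinh_pos_iff.mpr (mem_Ioi.mp hx))
    have hkx : Real.cosh x ^ 2 = Real.sinh x ^ 2 + 1 := by
      have := Real.cosh_sq_sub_sinh_sq x; linarith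
    have hX2 : deriv (deriv ξ) x = (1/(Real.sinh x)^2 + 2/x^2
        - 2*(Real.cosh x/Real.sinh x)/x + (Real.cosh x/Real.sinh x)^2) * ξ x - ω^2 * ξ x := by
      have := hξ x hx; linarith
    have heq : v =ᶠ[nhds x] fun y => ω⁻¹ * (-(deriv ξ y)
        - ((1 - y * (Real.cosh y/Real.sinh y))/y) * ξ y
        - (q / Real.sinh y) * ζ y) := by
      filter_upwards [hod.mem_nhds hx] with y hy
      rw [← hv y hy, inv_mul_cancel_left₀ hω]
    rw [heq.deriv_eq]
    have hsinh := Real.hasDerivAt_sinh x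
    have hcosh := Real.hasDerivAt_cosh x
    have hD : HasDerivAt (fun y => -(deriv ξ y)
        - ((1 - y * (Real.cosh y/Real.sinh y))/y) * ξ y
        - (q / Real.sinh y) * ζ y)
        ((ω^2 - 1 - 1/x^2 - 3/(Real.sinh x)^2 + 2*Real.cosh x/(x*Real.sinh x)) * ξ x
        + (Real.cosh x/Real.sinh x - 1/x) * deriv ξ x
        + q * Real.cosh x/(Real.sinh x)^2 * ζ x
        - q/Real.sinh x * deriv ζ x) x := by
      have h2 := (((hasDerivAt_id' (x := x)).mul (hcosh.div hsinh hs0)).const_sub 1).div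
        (hasDerivAt_id' (x := x)) hx0
      have h3 := (h2.mul (hξd x hx))
      have h4 := ((hasDerivAt_const x (q)).div hsinh hs0).mul (hζd x hx)
      have h := ((hξd2 x hx).neg.sub h3).sub h4
      refine h.congr_deriv (Eq.symm ?_)
      simp only [Pi.div_apply, Pi.mul_apply, Pi.pow_apply, Pi.sub_apply, Pi.add_apply, Pi.neg_apply]
      linear_combination (norm := (field_simp; ring)) hX2 + (2*ξ x/(Real.sinh x)^2) * hkx
    exact (hD.const_mul ω⁻¹).deriv
  -- first derivative of α
  have hda : ∀ x ∈ Ioi (0:ℝ), deriv α x = ω⁻¹ *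
      ((1/x^2 + 2/(Real.sinh x)^2 - ω^2) * ζ x - 1/x * deriv ζ x
        - q * Real.cosh x/(Real.sinh x)^2 * ξ x
        + q/Real.sinh x * deriv ξ x) := by
    intro x hx
    have hx0 : x ≠ 0 := ne_of_gt (mem_Ioi.mp hx)
    have hs0 : Real.sinh x ≠ 0 := ne_of_gt (Real.sinh_pos_iff.mpr (mem_Ioi.mp hx))
    have hZ2 : deriv (deriv ζ) x = (2/(Real.sinh x)^2) * ζ x - ω^2 * ζ x := by
      have := hζ x hx; linarith
    have heq : α =ᶠ[nhds x] fun y => ω⁻¹ * (deriv ζ y - ζ y / y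
        + (q / Real.sinh y) * ξ y) := by
      filter_upwards [hod.mem_nhds hx] with y hy
      rw [← hα y hy, inv_mul_cancel_left₀ hω]
    rw [heq.deriv_eq]
    have hsinh := Real.hasDerivAt_sinh x
    have hcosh := Real.hasDerivAt_cosh x
    have hD : HasDerivAt (fun y => deriv ζ y - ζ y / y
        + (q / Real.sinh y) * ξ y)
        ((1/x^2 + 2/(Real.sinh x)^2 - ω^2) * ζ x - 1/x * deriv ζ x
        - q * Real.cosh x/(Real.sinh x)^2 * ξ x
        + q/Real.sinh x * deriv ξ x) x := by
      have h2 := (hζd x hx).div (hasDerivAt_id' (x := x)) hx0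
      have h3 := ((hasDerivAt_const x (q)).div hsinh hs0).mul (hξd x hx)
      have h := ((hζd2 x hx).sub h2).add h3
      refine h.congr_deriv (Eq.symm ?_)
      simp only [Pi.div_apply, Pi.mul_apply, Pi.pow_apply, Pi.sub_apply, Pi.add_apply, Pi.neg_apply]
      linear_combination (norm := (field_simp; ring)) (-1 : ℝ) * hZ2
    exact (hD.const_mul ω⁻¹).deriv
  -- second derivative of v
  have hdv2 : ∀ x ∈ Ioi (0:ℝ), ω * deriv (deriv v) x =
      (2)*(Real.cosh x)*(ξ x)/(x^2*(Real.sinh x)) + (-6)*(ξ x)/(x*(Real.sinh x)^2)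
      + (2)*(Real.cosh x)*(deriv ξ x)/(x*(Real.sinh x)) + (-3)*(ξ x)/x + (ξ x)*ω^2/x
      + (-4)*(q)*(ζ x)/((Real.sinh x)^3) + (8)*(Real.cosh x)*(ξ x)/((Real.sinh x)^3)
      + (-4)*(deriv ξ x)/((Real.sinh x)^2)
      + (2)*(Real.cosh x)*(q)*(deriv ζ x)/((Real.sinh x)^2)
      + (-1)*(q)*(ζ x)/(Real.sinh x) + (q)*(ζ x)*ω^2/(Real.sinh x)
      + (Real.cosh x)*(ξ x)/(Real.sinh x) + (-1)*(Real.cosh x)*(ξ x)*ω^2/(Real.sinh x)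
      + (-1)*(deriv ξ x) + (deriv ξ x)*ω^2 := by
    intro x hx
    have hx0 : x ≠ 0 := ne_of_gt (mem_Ioi.mp hx)
    have hs0 : Real.sinh x ≠ 0 := ne_of_gt (Real.sinh_pos_iff.mpr (mem_Ioi.mp hx))
    have hkx : Real.cosh x ^ 2 = Real.sinh x ^ 2 + 1 := by
      have := Real.cosh_sq_sub_sinh_sq x; linarith
    have hX2 : deriv (deriv ξ) x = (1/(Real.sinh x)^2 + 2/x^2
        - 2*(Real.cosh x/Real.sinh x)/x + (Real.cosh x/Real.sinh x)^2) * ξ x - ω^2 * ξ x := by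
      have := hξ x hx; linarith
    have hZ2 : deriv (deriv ζ) x = (2/(Real.sinh x)^2) * ζ x - ω^2 * ζ x := by
      have := hζ x hx; linarith
    have heq2 : deriv v =ᶠ[nhds x] fun y => ω⁻¹ *
        ((ω^2 - 1 - 1/y^2 - 3/(Real.sinh y)^2 + 2*Real.cosh y/(y*Real.sinh y)) * ξ y
        + (Real.cosh y/Real.sinh y - 1/y) * deriv ξ y
        + q * Real.cosh y/(Real.sinh y)^2 * ζ y
        - q/Real.sinh y * deriv ζ y) := by
      filter_upwards [hod.mem_nhds hx] with y hy
      exact hdv y hy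
    rw [heq2.deriv_eq]
    have hsinh := Real.hasDerivAt_sinh x
    have hcosh := Real.hasDerivAt_cosh x
    have hD2 : HasDerivAt (fun y =>
        (ω^2 - 1 - 1/y^2 - 3/(Real.sinh y)^2 + 2*Real.cosh y/(y*Real.sinh y)) * ξ y
        + (Real.cosh y/Real.sinh y - 1/y) * deriv ξ y
        + q * Real.cosh y/(Real.sinh y)^2 * ζ y
        - q/Real.sinh y * deriv ζ y)
        ((2)*(Real.cosh x)*(ξ x)/(x^2*(Real.sinh x)) + (-6)*(ξ x)/(x*(Real.sinh x)^2)
        + (2)*(Real.cosh x)*(deriv ξ x)/(x*(Real.sinh x)) + (-3)*(ξ x)/x + (ξ x)*ω^2/x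
        + (-4)*(q)*(ζ x)/((Real.sinh x)^3) + (8)*(Real.cosh x)*(ξ x)/((Real.sinh x)^3)
        + (-4)*(deriv ξ x)/((Real.sinh x)^2)
        + (2)*(Real.cosh x)*(q)*(deriv ζ x)/((Real.sinh x)^2)
        + (-1)*(q)*(ζ x)/(Real.sinh x) + (q)*(ζ x)*ω^2/(Real.sinh x)
        + (Real.cosh x)*(ξ x)/(Real.sinh x) + (-1)*(Real.cosh x)*(ξ x)*ω^2/(Real.sinh x)
        + (-1)*(deriv ξ x) + (deriv ξ x)*ω^2) x := by
      have hc1 := (((hasDerivAt_const x (ω^2 - 1)).sub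
          ((hasDerivAt_const x 1).div (hasDerivAt_pow 2 x) (pow_ne_zero 2 hx0))).sub
          ((hasDerivAt_const x 3).div (hsinh.pow 2) (pow_ne_zero 2 hs0))).add
          ((hcosh.const_mul 2).div ((hasDerivAt_id' (x := x)).mul hsinh) (mul_ne_zero hx0 hs0))
      have hc2 := (hcosh.div hsinh hs0).sub
          ((hasDerivAt_const x 1).div (hasDerivAt_id' (x := x)) hx0)
      have hc3 := (hcosh.const_mul (q)).div (hsinh.pow 2) (pow_ne_zero 2 hs0)
      have hc4 := (hasDerivAt_const x (q)).div hsinh hs0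
      have h := (((hc1.mul (hξd x hx)).add (hc2.mul (hξd2 x hx))).add
          (hc3.mul (hζd x hx))).sub (hc4.mul (hζd2 x hx))
      refine h.congr_deriv (Eq.symm ?_)
      simp only [Pi.div_apply, Pi.mul_apply, Pi.pow_apply, Pi.sub_apply, Pi.add_apply, Pi.neg_apply]
      linear_combination (norm := (field_simp; ring))
        ((Real.sinh x - x*Real.cosh x)/(x*Real.sinh x)) * hX2
        + (q/Real.sinh x) * hZ2
        + ((5*Real.sinh x*(ξ x) + 2*x*q*(ζ x) - x*Real.cosh x*(ξ x)
            + x*Real.sinh x*(deriv ξ x))/(x*(Real.sinh x)^3)) * hkx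
    rw [(hD2.const_mul ω⁻¹).deriv, mul_inv_cancel_left₀ hω]
  -- second derivative of α
  have hda2 : ∀ x ∈ Ioi (0:ℝ), ω * deriv (deriv α) x =
      (-2)*(ζ x)/(x^3) + (2)*(q)*(ξ x)/(x^2*(Real.sinh x)) + (2)*(deriv ζ x)/(x^2)
      + (-2)*(ζ x)/(x*(Real.sinh x)^2) + (-2)*(Real.cosh x)*(q)*(ξ x)/(x*(Real.sinh x)^2)
      + (ζ x)*ω^2/x + (4)*(q)*(ξ x)/((Real.sinh x)^3)
      + (-4)*(Real.cosh x)*(ζ x)/((Real.sinh x)^3) + (2)*(deriv ζ x)/((Real.sinh x)^2)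
      + (-2)*(Real.cosh x)*(q)*(deriv ξ x)/((Real.sinh x)^2)
      + (2)*(q)*(ξ x)/(Real.sinh x) + (-1)*(q)*(ξ x)*ω^2/(Real.sinh x)
      + (-1)*(deriv ζ x)*ω^2 := by
    intro x hx
    have hx0 : x ≠ 0 := ne_of_gt (mem_Ioi.mp hx)
    have hs0 : Real.sinh x ≠ 0 := ne_of_gt (Real.sinh_pos_iff.mpr (mem_Ioi.mp hx))
    have hkx : Real.cosh x ^ 2 = Real.sinh x ^ 2 + 1 := by
      have := Real.cosh_sq_sub_sinh_sq x; linarith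
    have hX2 : deriv (deriv ξ) x = (1/(Real.sinh x)^2 + 2/x^2
        - 2*(Real.cosh x/Real.sinh x)/x + (Real.cosh x/Real.sinh x)^2) * ξ x - ω^2 * ξ x := by
      have := hξ x hx; linarith
    have hZ2 : deriv (deriv ζ) x = (2/(Real.sinh x)^2) * ζ x - ω^2 * ζ x := by
      have := hζ x hx; linarith
    have heq2 : deriv α =ᶠ[nhds x] fun y => ω⁻¹ *
        ((1/y^2 + 2/(Real.sinh y)^2 - ω^2) * ζ y - 1/y * deriv ζ y
        - q * Real.cosh y/(Real.sinh y)^2 * ξ y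
        + q/Real.sinh y * deriv ξ y) := by
      filter_upwards [hod.mem_nhds hx] with y hy
      exact hda y hy
    rw [heq2.deriv_eq]
    have hsinh := Real.hasDerivAt_sinh x
    have hcosh := Real.hasDerivAt_cosh x
    have hD2 : HasDerivAt (fun y =>
        (1/y^2 + 2/(Real.sinh y)^2 - ω^2) * ζ y - 1/y * deriv ζ y
        - q * Real.cosh y/(Real.sinh y)^2 * ξ y
        + q/Real.sinh y * deriv ξ y)
        ((-2)*(ζ x)/(x^3) + (2)*(q)*(ξ x)/(x^2*(Real.sinh x)) + (2)*(deriv ζ x)/(x^2)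
        + (-2)*(ζ x)/(x*(Real.sinh x)^2) + (-2)*(Real.cosh x)*(q)*(ξ x)/(x*(Real.sinh x)^2)
        + (ζ x)*ω^2/x + (4)*(q)*(ξ x)/((Real.sinh x)^3)
        + (-4)*(Real.cosh x)*(ζ x)/((Real.sinh x)^3) + (2)*(deriv ζ x)/((Real.sinh x)^2)
        + (-2)*(Real.cosh x)*(q)*(deriv ξ x)/((Real.sinh x)^2)
        + (2)*(q)*(ξ x)/(Real.sinh x) + (-1)*(q)*(ξ x)*ω^2/(Real.sinh x)
        + (-1)*(deriv ζ x)*ω^2) x := by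
      have hc1 := (((hasDerivAt_const x 1).div (hasDerivAt_pow 2 x) (pow_ne_zero 2 hx0)).add
          ((hasDerivAt_const x 2).div (hsinh.pow 2) (pow_ne_zero 2 hs0))).sub
          (hasDerivAt_const x (ω^2))
      have hc2 := (hasDerivAt_const x 1).div (hasDerivAt_id' (x := x)) hx0
      have hc3 := (hcosh.const_mul (q)).div (hsinh.pow 2) (pow_ne_zero 2 hs0)
      have hc4 := (hasDerivAt_const x (q)).div hsinh hs0
      have h := (((hc1.mul (hζd x hx)).sub (hc2.mul (hζd2 x hx))).sub
          (hc3.mul (hξd x hx))).add (hc4.mul (hξd2 x hx))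
      refine h.congr_deriv (Eq.symm ?_)
      simp only [Pi.div_apply, Pi.mul_apply, Pi.pow_apply, Pi.sub_apply, Pi.add_apply, Pi.neg_apply]
      linear_combination (norm := (field_simp; ring))
        (-(q)/Real.sinh x) * hX2 + (1/x) * hZ2
        + (-3*q*(ξ x)/((Real.sinh x)^3)) * hkx
    rw [(hD2.const_mul ω⁻¹).deriv, mul_inv_cancel_left₀ hω]
  constructor
  · intro r hr
    have hx0 : r ≠ 0 := ne_of_gt (mem_Ioi.mp hr)
    have hs0 : Real.sinh r ≠ 0 := ne_of_gt (Real.sinh_pos_iff.mpr (mem_Ioi.mp hr))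
    have hkx : Real.cosh r ^ 2 = Real.sinh r ^ 2 + 1 := by
      have := Real.cosh_sq_sub_sinh_sq r; linarith
    refine mul_left_cancel₀ hω ?_
    linear_combination (norm := (field_simp; ring))
      (-1 : ℝ) * hdv2 r hr
      + (3/(Real.sinh r)^2 - 2*(Real.cosh r/Real.sinh r)/r + (Real.cosh r/Real.sinh r)^2 - ω^2)
          * hv r hr
      + (2*q * (Real.cosh r/Real.sinh r)/Real.sinh r) * hα r hr
      + ((-3*Real.sinh r*(ξ r) - r*q*(ζ r) + r*Real.cosh r*(ξ r)
          - r*Real.sinh r*(deriv ξ r))/(r*(Real.sinh r)^3)) * hkx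
      + ((2*Real.cosh r*(ξ r))/((Real.sinh r)^3)) * hq2
  · intro r hr
    have hx0 : r ≠ 0 := ne_of_gt (mem_Ioi.mp hr)
    have hs0 : Real.sinh r ≠ 0 := ne_of_gt (Real.sinh_pos_iff.mpr (mem_Ioi.mp hr))
    have hkx : Real.cosh r ^ 2 = Real.sinh r ^ 2 + 1 := by
      have := Real.cosh_sq_sub_sinh_sq r; linarith
    refine mul_left_cancel₀ hω ?_
    linear_combination (norm := (field_simp; ring))
      (-1 : ℝ) * hda2 r hr
      + (2/(Real.sinh r)^2 + 2/r^2 - ω^2) * hα r hr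
      + (2*q * (Real.cosh r/Real.sinh r)/Real.sinh r) * hv r hr
      + ((2*q*(ξ r))/((Real.sinh r)^3)) * hkx
      + ((-2*Real.cosh r*(ζ r))/((Real.sinh r)^3)) * hq2
end

section
/- For s > 0, ∫₀^∞ (r²/sinh²(r)) e^{−sr} dr = Φ'(s/2) + (s/4) Φ''(s/2), where Φ is the digamma function. -/
open MeasureTheory Set Real

/-- The digamma function `Φ(z) = Γ'(z)/Γ(z) = (log ∘ Γ)'(z)`. -/
noncomputable def digamma : ℝ → ℝ := deriv (fun x => Real.log (Real.Gamma x))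

/-!
Expanding `1 / sinh² r = 4 ∑ n e^{-2nr}` and integrating termwise against `r² e^{-sr}` turns
the left-hand side into `∑ n / (n + s/2)³ = ζ(2, s/2) - (s/2) ζ(3, s/2)`. On the other side,
the Bohr–Mollerup limit gives `log Γ(x) = ∑ (x/(n+1) - log (1 + x/(n+1))) - γ x - log x`,
which can be differentiated termwise three times: `Φ' = ζ(2, ·)` and `Φ'' = -2 ζ(3, ·)`.
-/

open Filter Topology
open scoped Nat

/-- The Hurwitz zeta value `ζ(k, x)`; a junk value unless `1 < k` and `0 < x`. -/
noncomputable def hurwitzSum (k : ℕ) (x : ℝ) : ℝ := ∑' n : ℕ, 1 / ((n : ℝ) + x) ^ k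

lemma summable_one_div_nat_add_pow {x : ℝ} (hx : 0 < x) {k : ℕ} (hk : 1 < k) :
    Summable fun n : ℕ => 1 / ((n : ℝ) + x) ^ k := by
  refine ((summable_one_div_nat_add_rpow x k).mpr (by exact_mod_cast hk)).congr fun n => ?_
  rw [abs_of_pos (by positivity), rpow_natCast]

lemma hurwitzSum_eq_add_one {k : ℕ} (hk : 1 < k) {x : ℝ} (hx : 0 < x) :
    hurwitzSum k x = 1 / x ^ k + hurwitzSum k (x + 1) := by
  rw [hurwitzSum, (summable_one_div_nat_add_pow hx hk).tsum_eq_zero_add, hurwitzSum]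
  push_cast
  simp_rw [zero_add, add_assoc, add_comm 1 x]

lemma hasDerivAt_hurwitzSum {k : ℕ} (hk : 1 < k) {x : ℝ} (hx : 0 < x) :
    HasDerivAt (hurwitzSum k) (-k * hurwitzSum (k + 1) x) x := by
  have hterm : ∀ (n : ℕ) (y : ℝ), 0 < y →
      HasDerivAt (fun z => 1 / ((n : ℝ) + z) ^ k) (-k * (1 / ((n : ℝ) + y) ^ (k + 1))) y := by
    intro n y hy
    obtain ⟨m, rfl⟩ : ∃ m, k = m + 1 := ⟨k - 1, by omega⟩
    have hny : (n : ℝ) + y ≠ 0 := by positivity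
    simp only [one_div]
    refine ((((hasDerivAt_id y).const_add (n : ℝ)).fun_pow (m + 1)).fun_inv
      (pow_ne_zero _ hny)).congr_deriv ?_
    simp only [id, add_tsub_cancel_right]
    field_simp
    ring
  have hbound : ∀ (n : ℕ) (y : ℝ), y ∈ Ioi (x / 2) →
      ‖-k * (1 / ((n : ℝ) + y) ^ (k + 1))‖ ≤ k * (1 / ((n : ℝ) + x / 2) ^ (k + 1)) := by
    intro n y (hy : x / 2 < y)
    have hx2 : 0 < x / 2 := half_pos hx
    have hy0 : 0 < y := hx2.trans hy
    rw [norm_mul, norm_neg, Real.norm_natCast, Real.norm_of_nonneg (by positivity)]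
    gcongr
  have h := hasDerivAt_tsum_of_isPreconnected
    ((summable_one_div_nat_add_pow (half_pos hx) (by omega : 1 < k + 1)).mul_left (k : ℝ))
    isOpen_Ioi isPreconnected_Ioi
    (fun n y hy => hterm n y (lt_trans (half_pos hx) hy)) hbound
    (half_lt_self hx) (summable_one_div_nat_add_pow hx hk) (half_lt_self hx)
  rwa [tsum_mul_left] at h

lemma sum_range_sub_log_one_add {x : ℝ} (hx : 0 < x) (N : ℕ) :
    ∑ n ∈ Finset.range N, (x / (n + 1) - log (1 + x / (n + 1))) =
      BohrMollerup.logGammaSeq x N + x * (harmonic N - log N) + log x := by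
  have hlog : ∀ n : ℕ, log (1 + x / (n + 1)) = log (x + (n + 1)) - log (n + 1) := fun n => by
    rw [← log_div (by positivity) (by positivity)]
    congr 1
    field_simp
    ring
  have hfact : log (N ! : ℝ) = ∑ n ∈ Finset.range N, log (n + 1) := by
    rw [← Finset.prod_range_add_one_eq_factorial, Nat.cast_prod,
      log_prod (fun n _ => by positivity)]
    push_cast
    rfl
  simp_rw [hlog, BohrMollerup.logGammaSeq, hfact, harmonic,
    Finset.sum_range_succ' (fun m => log (x + m))]
  push_cast
  simp only [mul_sub, Finset.mul_sum, Finset.sum_sub_distrib, div_eq_mul_inv]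
  ring_nf

lemma hasSum_sub_log_one_add {x : ℝ} (hx : 0 < x) :
    HasSum (fun n : ℕ => x / (n + 1) - log (1 + x / (n + 1)))
      (log (Gamma x) + eulerMascheroniConstant * x + log x) := by
  have hnonneg : ∀ n : ℕ, 0 ≤ x / (n + 1) - log (1 + x / (n + 1)) := fun n => by
    have := log_le_sub_one_of_pos (show 0 < 1 + x / (n + 1) by positivity)
    linarith
  rw [hasSum_iff_tendsto_nat_of_nonneg hnonneg]
  simp_rw [sum_range_sub_log_one_add hx]
  have h := ((BohrMollerup.tendsto_log_gamma hx).add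
    (tendsto_harmonic_sub_log.const_mul x)).add_const (log x)
  convert h using 2
  ring

lemma abs_one_div_sub_one_div_add_le {c y : ℝ} (hc : 0 < c) (hy : 0 ≤ y) :
    |1 / c - 1 / (c + y)| ≤ y / c ^ 2 := by
  have hcy : 0 < c + y := by linarith
  have h : 1 / c - 1 / (c + y) = y / (c * (c + y)) := by
    field_simp
    ring
  rw [h, abs_of_nonneg (by positivity), pow_two]
  gcongr
  linarith

lemma hasDerivAt_tsum_sub_log_one_add {x : ℝ} (hx : 0 < x) :
    HasDerivAt (fun y => ∑' n : ℕ, (y / (n + 1) - log (1 + y / (n + 1))))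
      (∑' n : ℕ, (1 / (n + 1) - 1 / (n + 1 + x))) x := by
  have hterm : ∀ (n : ℕ) (y : ℝ), 0 < y →
      HasDerivAt (fun z => z / (n + 1) - log (1 + z / (n + 1)))
        (1 / (n + 1) - 1 / (n + 1 + y)) y := by
    intro n y hy
    have hne : 1 + y / (n + 1) ≠ 0 := by positivity
    refine (((hasDerivAt_id y).div_const _).sub
      ((((hasDerivAt_id y).div_const _).const_add 1).log hne)).congr_deriv ?_
    simp only [id]
    field_simp
  refine hasDerivAt_tsum_of_isPreconnected
    ((summable_one_div_nat_add_pow one_pos one_lt_two).mul_left (x + 1))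
    isOpen_Ioo isPreconnected_Ioo (fun n y hy => hterm n y hy.1) (fun n y hy => ?_)
    ⟨hx, lt_add_one x⟩ (hasSum_sub_log_one_add hx).summable ⟨hx, lt_add_one x⟩
  rw [Real.norm_eq_abs, mul_one_div]
  exact (abs_one_div_sub_one_div_add_le (by positivity) hy.1.le).trans
    (by gcongr; exact hy.2.le)

lemma digamma_eq_tsum {x : ℝ} (hx : 0 < x) :
    digamma x =
      ∑' n : ℕ, (1 / (n + 1) - 1 / (n + 1 + x)) - eulerMascheroniConstant - 1 / x := by
  have hlogGamma : (fun y => log (Gamma y)) =ᶠ[𝓝 x] fun y =>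
      ∑' n : ℕ, (y / (n + 1) - log (1 + y / (n + 1))) - eulerMascheroniConstant * y
        - log y := by
    filter_upwards [isOpen_Ioi.mem_nhds hx] with y (hy : 0 < y)
    rw [(hasSum_sub_log_one_add hy).tsum_eq]
    ring
  rw [digamma, hlogGamma.deriv_eq]
  refine ((((hasDerivAt_tsum_sub_log_one_add hx).sub
    ((hasDerivAt_id x).const_mul _)).sub (hasDerivAt_log hx.ne'))).deriv.trans ?_
  simp [one_div]

lemma hasDerivAt_tsum_one_div_sub_one_div_add {x : ℝ} (hx : 0 < x) :
    HasDerivAt (fun y => ∑' n : ℕ, (1 / ((n : ℝ) + 1) - 1 / (n + 1 + y)))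
      (hurwitzSum 2 (x + 1)) x := by
  have hterm : ∀ (n : ℕ) (y : ℝ), 0 < y →
      HasDerivAt (fun z => 1 / ((n : ℝ) + 1) - 1 / (n + 1 + z))
        (1 / ((n : ℝ) + (y + 1)) ^ 2) y := by
    intro n y hy
    have hne : (n : ℝ) + 1 + y ≠ 0 := by positivity
    simp only [one_div]
    refine (((hasDerivAt_id y).const_add ((n : ℝ) + 1)).fun_inv hne).const_sub _
      |>.congr_deriv ?_
    simp only [id]
    ring
  have hsummable : Summable fun n : ℕ => 1 / ((n : ℝ) + 1) - 1 / (n + 1 + x) :=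
    ((summable_one_div_nat_add_pow one_pos one_lt_two).mul_left x).of_norm_bounded fun n => by
      rw [Real.norm_eq_abs, mul_one_div]
      exact abs_one_div_sub_one_div_add_le (by positivity) hx.le
  refine hasDerivAt_tsum_of_isPreconnected (summable_one_div_nat_add_pow one_pos one_lt_two)
    isOpen_Ioi isPreconnected_Ioi hterm (fun n y (hy : 0 < y) => ?_) hx hsummable hx
  rw [Real.norm_of_nonneg (by positivity)]
  gcongr
  linarith

lemma deriv_digamma {x : ℝ} (hx : 0 < x) : deriv digamma x = hurwitzSum 2 x := by
  have h : digamma =ᶠ[𝓝 x] fun y =>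
      ∑' n : ℕ, (1 / (n + 1) - 1 / (n + 1 + y)) - eulerMascheroniConstant - 1 / y := by
    filter_upwards [isOpen_Ioi.mem_nhds hx] with y (hy : 0 < y)
    exact digamma_eq_tsum hy
  have hinv : HasDerivAt (fun y : ℝ => 1 / y) (-(1 / x ^ 2)) x := by
    simpa only [one_div] using hasDerivAt_inv hx.ne'
  rw [h.deriv_eq, hurwitzSum_eq_add_one one_lt_two hx]
  refine (((hasDerivAt_tsum_one_div_sub_one_div_add hx).sub_const _).fun_sub hinv).deriv.trans ?_
  ring

lemma deriv_deriv_digamma {x : ℝ} (hx : 0 < x) :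
    deriv (deriv digamma) x = -2 * hurwitzSum 3 x := by
  have h : deriv digamma =ᶠ[𝓝 x] hurwitzSum 2 := by
    filter_upwards [isOpen_Ioi.mem_nhds hx] with y (hy : 0 < y)
    exact deriv_digamma hy
  rw [h.deriv_eq, (hasDerivAt_hurwitzSum one_lt_two hx).deriv]
  norm_num

lemma integral_sq_mul_exp_neg_mul {a : ℝ} (ha : 0 < a) :
    ∫ r in Ioi (0 : ℝ), r ^ 2 * exp (-a * r) = 2 / a ^ 3 := by
  have h := integral_rpow_mul_exp_neg_mul_Ioi (by norm_num : (0 : ℝ) < 3) ha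
  norm_num [Gamma_ofNat_eq_factorial] at h
  simp_rw [neg_mul, h]
  field_simp

lemma integrableOn_sq_mul_exp_neg_mul {a : ℝ} (ha : 0 < a) :
    IntegrableOn (fun r : ℝ => r ^ 2 * exp (-a * r)) (Ioi 0) :=
  Integrable.of_integral_ne_zero <| by rw [integral_sq_mul_exp_neg_mul ha]; positivity

lemma hasSum_inv_sinh_sq {r : ℝ} (hr : 0 < r) :
    HasSum (fun n : ℕ => 4 * n * exp (-(2 * n * r))) (sinh r ^ 2)⁻¹ := by
  have hq : ‖exp (-(2 * r))‖ < 1 := by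
    rw [Real.norm_of_nonneg (exp_nonneg _), exp_lt_one_iff]
    linarith
  have hpow : ∀ n : ℕ, exp (-(2 * r)) ^ n = exp (-(2 * n * r)) := fun n => by
    rw [← exp_nat_mul]
    ring_nf
  have hsinh : (1 - exp (-(2 * r))) ^ 2 = 4 * exp (-(2 * r)) * sinh r ^ 2 := by
    have h1 : exp (-(2 * r)) = exp (-r) ^ 2 := by rw [← exp_nat_mul]; ring_nf
    have h2 : exp r * exp (-r) = 1 := by rw [← exp_add, add_neg_cancel, exp_zero]
    rw [h1, sinh_eq]
    linear_combination (-(1 + exp r * exp (-r) - 2 * exp (-r) ^ 2)) * h2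
  have hval : 4 * (exp (-(2 * r)) / (1 - exp (-(2 * r))) ^ 2) = (sinh r ^ 2)⁻¹ := by
    have hne : sinh r ≠ 0 := (sinh_pos_iff.mpr hr).ne'
    rw [hsinh]
    field_simp
  rw [← hval]
  refine ((hasSum_coe_mul_geometric_of_norm_lt_one hq).mul_left 4).congr_fun fun n => ?_
  rw [hpow]
  ring

lemma hasSum_integral_sq_div_sinh_sq_mul_exp {s : ℝ} (hs : 0 < s) :
    HasSum (fun n : ℕ => n / (n + s / 2) ^ 3)
      (∫ r in Ioi (0 : ℝ), (r ^ 2 / sinh r ^ 2) * exp (-s * r)) := by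
  set F : ℕ → ℝ → ℝ := fun n r => 4 * n * (r ^ 2 * exp (-(2 * n + s) * r))
  have hF_nonneg : ∀ n r, 0 ≤ F n r := fun n r => by positivity
  have hF_int : ∀ n, IntegrableOn (F n) (Ioi 0) := fun n =>
    (integrableOn_sq_mul_exp_neg_mul (by positivity)).const_mul _
  have hF_integral : ∀ n : ℕ, ∫ r in Ioi (0 : ℝ), F n r = n / (n + s / 2) ^ 3 := fun n => by
    rw [integral_const_mul, integral_sq_mul_exp_neg_mul (by positivity)]
    field_simp
    ring
  have hF_summable : Summable fun n : ℕ => (n : ℝ) / (n + s / 2) ^ 3 := by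
    refine (summable_one_div_nat_add_pow (half_pos hs) one_lt_two).of_nonneg_of_le
      (fun n => by positivity) fun n => ?_
    rw [div_le_div_iff₀ (by positivity) (by positivity)]
    nlinarith [pow_pos (show (0 : ℝ) < n + s / 2 by positivity) 2]
  have hF_sum : ∀ r ∈ Ioi (0 : ℝ), ∑' n, F n r = (r ^ 2 / sinh r ^ 2) * exp (-s * r) := by
    intro r (hr : 0 < r)
    have hterm : ∀ n : ℕ, F n r = r ^ 2 * exp (-s * r) * (4 * n * exp (-(2 * n * r))) := by
      intro n
      simp only [F]
      rw [show -(2 * n + s) * r = -(2 * n * r) + -s * r by ring, exp_add]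
      ring
    rw [tsum_congr hterm, ((hasSum_inv_sinh_sq hr).mul_left _).tsum_eq]
    ring
  rw [← setIntegral_congr_fun measurableSet_Ioi hF_sum]
  refine (hasSum_integral_of_summable_integral_norm hF_int ?_).congr_fun
    fun n => (hF_integral n).symm
  simp_rw [Real.norm_of_nonneg (hF_nonneg _ _), hF_integral]
  exact hF_summable

/-- `∫₀^∞ (r²/sinh²r) e^{−sr} dr = Φ'(s/2) + (s/4) Φ''(s/2)`
for `s > 0`, where `Φ` is the digamma function. -/
theorem stmt_16 (s : ℝ) (hs : 0 < s) :
    ∫ r in Ioi (0:ℝ), (r^2 / (Real.sinh r)^2) * Real.exp (-s * r)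
      = deriv digamma (s/2) + (s/4) * deriv (deriv digamma) (s/2) := by
  have hw : 0 < s / 2 := half_pos hs
  rw [deriv_digamma hw, deriv_deriv_digamma hw]
  have hsplit := ((summable_one_div_nat_add_pow hw one_lt_two).hasSum.sub
    ((summable_one_div_nat_add_pow hw (by norm_num : 1 < 3)).hasSum.mul_left (s / 2)))
  refine ((hasSum_integral_sq_div_sinh_sq_mul_exp hs).unique
    (hsplit.congr_fun fun n => ?_)).trans ?_
  · have : (n : ℝ) + s / 2 ≠ 0 := by positivity
    field_simp
    ring
  · rw [hurwitzSum, hurwitzSum]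
    ring
end
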